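/- arXiv:1109.2694 — 2 statements merged into one kernel-verified Lean document; each statement's English description precedes it below -/
import Mathlib

section
/- Let $(r(m))_{m\geq 1}$ be a nonincreasing sequence of nonnegative reals converging to 0, and let $(b_n)$ be a sequence of positive reals with $b_n \to 0$. Define $v_n = \lfloor b_n^{-1/(2d)} \rfloor$ and $m_n = \max\{v_n, \lfloor (r(v_n)/b_n^3)^{1/(3d)} \rfloor + 1\}$ for a fixed positive integer $d$. Then $m_n \to \infty$, $m_n^d b_n \to 0$, and $r(m_n)/(m_n^d b_n)^{3/2} \to 0$ as $n \to \infty$. -/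
/-!
Write `x_n = (r(v_n) / b_n³)^{1/(3d)}`, so that `m_n = max(v_n, ⌊x_n⌋ + 1)`. Since `m_n ≥ v_n → ∞`,
`m_n → ∞`. Next `m_n^d b_n ≤ v_n^d b_n + (x_n + 1)^d b_n`, where `v_n^d b_n ≤ b_n^{1/2}` and
`(x_n + 1)^d b_n = (r(v_n)^{1/(3d)} + b_n^{1/d})^d`, both tending to `0`. Finally `m_n > x_n` gives
`(m_n^d b_n)³ ≥ r(v_n)`, so by monotonicity of `r`,
`r(m_n) / (m_n^d b_n)^{3/2} ≤ r(v_n) / r(v_n)^{1/2} = r(v_n)^{1/2} → 0`.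
-/

open Filter Real Topology

section

variable {d : ℕ} {c ρ : ℝ}

lemma natFloor_rpow_neg_pow_mul_le (hd : d ≠ 0) (hc : 0 < c) :
    (⌊c ^ (-(1 / (2 * (d : ℝ))))⌋₊ : ℝ) ^ d * c ≤ c ^ ((1 : ℝ) / 2) := by
  have hpow : (c ^ (-(1 / (2 * (d : ℝ))))) ^ d * c = c ^ ((1 : ℝ) / 2) := by
    rw [← rpow_natCast, ← rpow_mul hc.le, ← rpow_add_one hc.ne']
    congr 1
    field_simp
    ring
  calc (⌊c ^ (-(1 / (2 * (d : ℝ))))⌋₊ : ℝ) ^ d * c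
      ≤ (c ^ (-(1 / (2 * (d : ℝ))))) ^ d * c := by
        gcongr
        exact Nat.floor_le (by positivity)
    _ = c ^ ((1 : ℝ) / 2) := hpow

lemma rpow_div_pow_three_mul_rpow (hd : d ≠ 0) (hc : 0 < c) (hρ : 0 ≤ ρ) :
    (ρ / c ^ 3) ^ (1 / (3 * (d : ℝ))) * c ^ (1 / (d : ℝ)) = ρ ^ (1 / (3 * (d : ℝ))) := by
  have hc3 : (c ^ 3) ^ (1 / (3 * (d : ℝ))) = c ^ (1 / (d : ℝ)) := by
    rw [← rpow_natCast_mul hc.le]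
    congr 1
    push_cast
    field_simp
  rw [div_rpow hρ (by positivity), hc3, div_mul_cancel₀ _ (by positivity)]

lemma natFloor_add_one_pow_mul_le (hd : d ≠ 0) (hc : 0 < c) (hρ : 0 ≤ ρ) :
    ((⌊(ρ / c ^ 3) ^ (1 / (3 * (d : ℝ)))⌋₊ : ℝ) + 1) ^ d * c
      ≤ (ρ ^ (1 / (3 * (d : ℝ))) + c ^ (1 / (d : ℝ))) ^ d := by
  set x := (ρ / c ^ 3) ^ (1 / (3 * (d : ℝ)))
  have hc_root : (c ^ (1 / (d : ℝ))) ^ d = c := by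
    rw [one_div, rpow_inv_natCast_pow hc.le hd]
  calc ((⌊x⌋₊ : ℝ) + 1) ^ d * c ≤ (x + 1) ^ d * (c ^ (1 / (d : ℝ))) ^ d := by
        rw [hc_root]
        gcongr
        exact Nat.floor_le (by positivity)
    _ = (x * c ^ (1 / (d : ℝ)) + c ^ (1 / (d : ℝ))) ^ d := by rw [← mul_pow]; ring
    _ = (ρ ^ (1 / (3 * (d : ℝ))) + c ^ (1 / (d : ℝ))) ^ d := by
        rw [rpow_div_pow_three_mul_rpow hd hc hρ]

lemma max_pow_mul_le_add {a b : ℝ} (ha : 0 ≤ a) (hb : 0 ≤ b) (hc : 0 ≤ c) :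
    max a b ^ d * c ≤ a ^ d * c + b ^ d * c := by
  rcases le_total a b with h | h
  · rw [max_eq_right h]
    exact le_add_of_nonneg_left (by positivity)
  · rw [max_eq_left h]
    exact le_add_of_nonneg_right (by positivity)

lemma pow_mul_le_of_eq_max (hd : d ≠ 0) (hc : 0 < c) (hρ : 0 ≤ ρ) {m : ℕ}
    (hm : m = max ⌊c ^ (-(1 / (2 * (d : ℝ))))⌋₊ (⌊(ρ / c ^ 3) ^ (1 / (3 * (d : ℝ)))⌋₊ + 1)) :
    (m : ℝ) ^ d * c ≤ c ^ ((1 : ℝ) / 2) + (ρ ^ (1 / (3 * (d : ℝ))) + c ^ (1 / (d : ℝ))) ^ d := by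
  rw [hm, Nat.cast_max, Nat.cast_add_one]
  refine (max_pow_mul_le_add (by positivity) (by positivity) hc.le).trans ?_
  gcongr
  · exact natFloor_rpow_neg_pow_mul_le hd hc
  · exact natFloor_add_one_pow_mul_le hd hc hρ

lemma le_pow_mul_cube_of_rpow_div_le (hd : d ≠ 0) (hc : 0 < c) (hρ : 0 ≤ ρ) {M : ℝ}
    (hM : 0 ≤ M) (h : (ρ / c ^ 3) ^ (1 / (3 * (d : ℝ))) ≤ M) : ρ ≤ (M ^ d * c) ^ 3 := by
  rw [one_div, rpow_inv_le_iff_of_pos (by positivity) hM (by positivity),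
    div_le_iff₀ (by positivity)] at h
  calc ρ ≤ M ^ (3 * (d : ℝ)) * c ^ 3 := h
    _ = (M ^ d * c) ^ 3 := by
        rw [← Nat.cast_ofNat, ← Nat.cast_mul, rpow_natCast]
        ring

lemma div_rpow_three_halves_le {s z : ℝ} (hs : 0 ≤ s) (hsρ : s ≤ ρ) (hz : 0 ≤ z)
    (hρz : ρ ≤ z ^ 3) : s / z ^ ((3 : ℝ) / 2) ≤ ρ ^ ((1 : ℝ) / 2) := by
  have hρ : 0 ≤ ρ := hs.trans hsρ
  have hsqrt : ρ ^ ((1 : ℝ) / 2) ≤ z ^ ((3 : ℝ) / 2) := by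
    calc ρ ^ ((1 : ℝ) / 2) ≤ (z ^ 3) ^ ((1 : ℝ) / 2) := by gcongr
      _ = z ^ ((3 : ℝ) / 2) := by
        rw [← rpow_natCast_mul hz]
        norm_num
  refine div_le_of_le_mul₀ (by positivity) (by positivity) ?_
  calc s ≤ ρ := hsρ
    _ = ρ ^ ((1 : ℝ) / 2) * ρ ^ ((1 : ℝ) / 2) := by
        rw [← rpow_add' hρ (by norm_num)]
        norm_num
    _ ≤ ρ ^ ((1 : ℝ) / 2) * z ^ ((3 : ℝ) / 2) := by gcongr

end

lemma tendsto_natFloor_rpow_neg_atTop {d : ℕ} (hd : d ≠ 0) {b : ℕ → ℝ} (hb_pos : ∀ n, 0 < b n)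
    (hb_lim : Tendsto b atTop (𝓝 0)) :
    Tendsto (fun n => ⌊(b n) ^ (-(1 / (2 * (d : ℝ))))⌋₊) atTop atTop := by
  have hb : Tendsto b atTop (𝓝[>] 0) :=
    tendsto_nhdsWithin_of_tendsto_nhds_of_eventually_within _ hb_lim (.of_forall hb_pos)
  refine tendsto_nat_floor_atTop.comp ((tendsto_rpow_neg_nhdsGT_zero ?_).comp hb)
  have : (0 : ℝ) < d := by positivity
  simp only [neg_lt_zero]
  positivity

/-- Lemma 2 of the paper (spatial version of Bosq–Merlevède–Peligrad). -/
theorem stmt0 (d : ℕ) (hd : 1 ≤ d) (r : ℕ → ℝ) (b : ℕ → ℝ)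
    (hr_nonneg : ∀ m, 0 ≤ r m) (hr_anti : ∀ m m', m ≤ m' → r m' ≤ r m)
    (hr_lim : Tendsto r atTop (nhds 0))
    (hb_pos : ∀ n, 0 < b n) (hb_lim : Tendsto b atTop (nhds 0))
    (v : ℕ → ℕ) (hv : ∀ n, v n = ⌊(b n) ^ (-(1 / (2 * (d : ℝ))))⌋₊)
    (m : ℕ → ℕ)
    (hm : ∀ n, m n = max (v n) (⌊(r (v n) / (b n) ^ (3 : ℕ)) ^ (1 / (3 * (d : ℝ)))⌋₊ + 1)) :
    Tendsto m atTop atTop ∧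
    Tendsto (fun n => (m n : ℝ) ^ d * b n) atTop (nhds 0) ∧
    Tendsto (fun n => r (m n) / ((m n : ℝ) ^ d * b n) ^ ((3 : ℝ) / 2)) atTop (nhds 0) := by
  have hd0 : d ≠ 0 := by omega
  have hv_top : Tendsto v atTop atTop := by
    rw [funext hv]
    exact tendsto_natFloor_rpow_neg_atTop hd0 hb_pos hb_lim
  have hvm : ∀ n, v n ≤ m n := fun n => by rw [hm n]; exact le_max_left _ _
  have hrv : Tendsto (fun n => r (v n)) atTop (𝓝 0) := hr_lim.comp hv_top
  refine ⟨tendsto_atTop_mono hvm hv_top, ?_, ?_⟩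
  · have hlim := (hb_lim.rpow_const_nhds_zero (by norm_num : (0 : ℝ) < 1 / 2)).add
      (((hrv.rpow_const_nhds_zero (by positivity : (0 : ℝ) < 1 / (3 * d))).add
        (hb_lim.rpow_const_nhds_zero (by positivity : (0 : ℝ) < 1 / d))).pow d)
    rw [add_zero, zero_pow hd0, add_zero] at hlim
    refine squeeze_zero (fun n => by have := hb_pos n; positivity) (fun n => ?_) hlim
    exact pow_mul_le_of_eq_max hd0 (hb_pos n) (hr_nonneg _) (hv n ▸ hm n)
  · have hbound : ∀ n, r (m n) / ((m n : ℝ) ^ d * b n) ^ ((3 : ℝ) / 2)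
        ≤ r (v n) ^ ((1 : ℝ) / 2) := fun n => by
      have hx : (r (v n) / b n ^ 3) ^ (1 / (3 * (d : ℝ))) ≤ m n := by
        rw [hm n, Nat.cast_max, Nat.cast_add_one]
        exact (Nat.lt_floor_add_one _).le.trans (le_max_right _ _)
      exact div_rpow_three_halves_le (hr_nonneg _) (hr_anti _ _ (hvm n))
        (by have := hb_pos n; positivity)
        (le_pow_mul_cube_of_rpow_div_le hd0 (hb_pos n) (hr_nonneg _) (Nat.cast_nonneg _) hx)
    refine squeeze_zero (fun n => ?_) hbound (hrv.rpow_const_nhds_zero (by norm_num))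
    exact div_nonneg (hr_nonneg _) (by have := hb_pos n; positivity)
end

section
/- Let $f$ be a bounded density continuous at distinct points $s \neq t$ of $\mathbb{R}$, and let $K$ be a Lipschitz kernel in $\mathbb{L}^1 \cap \mathbb{L}^2$ with $\int K = 1$. If $b_n \to 0^+$ then $\frac{1}{b_n}\,\mathbb{E}\left[K\left(\frac{s - X_0}{b_n}\right) K\left(\frac{t - X_0}{b_n}\right)\right] = \int_{\mathbb{R}} K(v) K\left(v + \frac{t - s}{b_n}\right) f(s - v b_n)\,dv \to 0$ as $n \to \infty$. -/
open MeasureTheory Filter Metric Bornology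
open scoped Topology

/-!
The substitution `x = s - v b` turns the moment into `∫ K v K (v + (t - s) / b) f (s - v b) dv`.
A uniformly continuous integrable kernel is bounded and vanishes at infinity, and
`|t - s| / b → ∞`, so the integrand tends to `0` pointwise while staying dominated by
`sup |K| · sup f · |K|`; dominated convergence concludes.
-/

theorem tendsto_setIntegral_ball_cobounded {F : Type*} [NormedAddCommGroup F] [MeasurableSpace F]
    [OpensMeasurableSpace F] {μ : Measure F} {h : F → ℝ} (hh : Integrable h μ)
    (r : ℝ) : Tendsto (fun x => ∫ y in ball x r, h y ∂μ) (cobounded F) (𝓝 0) := by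
  have : (cobounded F).IsCountablyGenerated := by rw [← comap_norm_atTop]; infer_instance
  simp_rw [← integral_indicator measurableSet_ball]
  have hlim : ∀ y, Tendsto (fun x => (ball x r).indicator h y) (cobounded F) (𝓝 0) := by
    intro y
    refine tendsto_const_nhds.congr' ?_
    filter_upwards [(tendsto_dist_right_cobounded_atTop y).eventually_ge_atTop r] with x hx
    rw [Set.indicator_of_notMem (by rw [mem_ball, dist_comm]; exact hx.not_gt)]
  simpa using tendsto_integral_filter_of_dominated_convergence (fun y => ‖h y‖)
    (Eventually.of_forall fun x => hh.aestronglyMeasurable.indicator measurableSet_ball)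
    (Eventually.of_forall fun x => ae_of_all _ fun y => norm_indicator_le_norm_self h y)
    hh.norm (ae_of_all _ hlim)

/-- If `‖g x‖ ≥ ε`, uniform continuity keeps `‖g‖ ≥ ε / 2` on a ball of fixed radius around `x`,
whose integral cannot vanish; but integrability forces these ball integrals to vanish at
infinity. -/
theorem UniformContinuous.tendsto_cocompact_zero_of_integrable {F E : Type*}
    [NormedAddCommGroup F] [ProperSpace F] [MeasurableSpace F] [BorelSpace F]
    [NormedAddCommGroup E] {μ : Measure F} [μ.IsAddHaarMeasure] {g : F → E}
    (hu : UniformContinuous g) (hi : Integrable g μ) :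
    Tendsto g (cocompact F) (𝓝 0) := by
  rw [← cobounded_eq_cocompact, Metric.tendsto_nhds]
  intro ε hε
  obtain ⟨δ, hδ, hg⟩ := Metric.uniformContinuous_iff.mp hu (ε / 2) (half_pos hε)
  have hc : 0 < μ.real (ball (0 : F) δ) :=
    ENNReal.toReal_pos (measure_ball_pos μ 0 hδ).ne' measure_ball_lt_top.ne
  filter_upwards [(tendsto_setIntegral_ball_cobounded hi.norm δ).eventually
    (gt_mem_nhds (mul_pos hc (half_pos hε)))] with x hx
  rw [dist_zero_right]
  by_contra! hgx
  have hlow : ∀ y ∈ ball x δ, ε / 2 ≤ ‖g y‖ := by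
    intro y hy
    have hxy := hg (mem_ball.mp hy)
    rw [dist_eq_norm] at hxy
    linarith [norm_sub_norm_le (g x) (g y), norm_sub_rev (g y) (g x)]
  have hint := setIntegral_ge_of_const_le measurableSet_ball measure_ball_lt_top.ne hlow
    hi.norm.integrableOn
  rw [measureReal_def, Measure.addHaar_ball_center, ← measureReal_def, smul_eq_mul] at hint
  linarith

theorem integral_comp_eq_integral_density_smul {α Ω E : Type*} [MeasurableSpace α]
    [MeasurableSpace Ω] [NormedAddCommGroup E] [NormedSpace ℝ E] {μ : Measure Ω} {ν : Measure α}
    {X : Ω → α} (hX : AEMeasurable X μ) {f : α → ℝ} (hf_meas : Measurable f)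
    (hf_nonneg : ∀ᵐ y ∂ν, 0 ≤ f y) (hf : μ.map X = ν.withDensity fun y => ENNReal.ofReal (f y))
    {g : α → E} (hg : AEStronglyMeasurable g (μ.map X)) :
    ∫ ω, g (X ω) ∂μ = ∫ y, f y • g y ∂ν := by
  rw [← integral_map hX hg, hf, integral_withDensity_eq_integral_toReal_smul
    hf_meas.ennreal_ofReal (ae_of_all _ fun _ => ENNReal.ofReal_lt_top)]
  refine integral_congr_ae ?_
  filter_upwards [hf_nonneg] with y hy
  rw [ENNReal.toReal_ofReal hy]

theorem integral_comp_sub_mul_right {E : Type*} [NormedAddCommGroup E] [NormedSpace ℝ E]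
    (g : ℝ → E) (s B : ℝ) : ∫ v, g (s - v * B) = |B⁻¹| • ∫ x, g x := by
  simpa only [mul_comm _ B, integral_sub_left_eq_self] using
    Measure.integral_comp_mul_left (fun y => g (s - y)) B

theorem inv_mul_integral_kernel_product_eq {f K : ℝ → ℝ} {s t B : ℝ} (hB : 0 < B) :
    B⁻¹ * ∫ y, f y * (K ((s - y) / B) * K ((t - y) / B)) =
      ∫ v, K v * K (v + (t - s) / B) * f (s - v * B) := by
  rw [← abs_of_pos (inv_pos.mpr hB), ← smul_eq_mul, ← integral_comp_sub_mul_right _ s]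
  refine integral_congr_ae (ae_of_all _ fun v => ?_)
  have h₁ : (s - (s - v * B)) / B = v := by field_simp; ring
  have h₂ : (t - (s - v * B)) / B = v + (t - s) / B := by field_simp; ring
  simp only [h₁, h₂]
  ring

theorem tendsto_integral_mul_comp_add_cobounded {ι : Type*} {l : Filter ι}
    [l.IsCountablyGenerated] {K : ℝ → ℝ} (hK : Integrable K) (hKc : Continuous K)
    (hK0 : Tendsto K (cocompact ℝ) (𝓝 0)) {g : ι → ℝ → ℝ} {M : ℝ}
    (hg_meas : ∀ i, AEStronglyMeasurable (g i)) (hg : ∀ i v, ‖g i v‖ ≤ M) {a : ι → ℝ}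
    (ha : Tendsto a l (cobounded ℝ)) :
    Tendsto (fun i => ∫ v, K v * K (v + a i) * g i v) l (𝓝 0) := by
  obtain ⟨C, hC⟩ := isBounded_iff_forall_norm_le.mp
    (ZeroAtInftyContinuousMap.isBounded_range ⟨⟨K, hKc⟩, hK0⟩)
  have hKC : ∀ x, ‖K x‖ ≤ C := fun x => hC _ ⟨x, rfl⟩
  have hshift : ∀ v, Tendsto (fun i => K (v + a i)) l (𝓝 0) := fun v =>
    hK0.comp ((cobounded_eq_cocompact (α := ℝ)) ▸ (tendsto_const_add_cobounded v).comp ha)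
  have hnorm : ∀ i v, ‖K v * K (v + a i) * g i v‖ ≤ ‖K v‖ * ‖K (v + a i)‖ * M := fun i v => by
    rw [norm_mul, norm_mul]
    exact mul_le_mul_of_nonneg_left (hg i v) (by positivity)
  have hdom : ∀ i v, ‖K v * K (v + a i) * g i v‖ ≤ ‖K v‖ * C * M := fun i v => by
    rw [norm_mul, norm_mul]
    exact mul_le_mul (mul_le_mul_of_nonneg_left (hKC _) (norm_nonneg _)) (hg i v)
      (norm_nonneg _) (mul_nonneg (norm_nonneg _) ((norm_nonneg _).trans (hKC 0)))
  have hlim : ∀ v, Tendsto (fun i => K v * K (v + a i) * g i v) l (𝓝 0) := fun v =>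
    squeeze_zero_norm (hnorm · v) (by
      simpa using ((hshift v).norm.const_mul ‖K v‖).mul_const M)
  simpa using tendsto_integral_filter_of_dominated_convergence (fun v => ‖K v‖ * C * M)
    (Eventually.of_forall fun i => (hKc.aestronglyMeasurable.mul
      (hKc.comp (continuous_add_const (a i))).aestronglyMeasurable).mul (hg_meas i))
    (Eventually.of_forall fun i => ae_of_all _ (hdom i))
    ((hK.norm.mul_const C).mul_const M) (ae_of_all _ hlim)

theorem stmt12_general {Ω : Type*} [MeasurableSpace Ω] (μ : Measure Ω) [IsProbabilityMeasure μ]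
    (X : Ω → ℝ) (hX : Measurable X)
    (f : ℝ → ℝ) (hf_meas : Measurable f) (hf_nonneg : ∀ y, 0 ≤ f y)
    (hf_density : Measure.map X μ = volume.withDensity (fun y => ENNReal.ofReal (f y)))
    (hf_bdd : ∃ M : ℝ, ∀ y, f y ≤ M)
    (s t : ℝ) (hst : s ≠ t)
    (K : ℝ → ℝ) (L : NNReal) (hK_lip : LipschitzWith L K)
    (hK_int : Integrable K)
    (b : ℕ → ℝ) (hb_pos : ∀ n, 0 < b n) (hb_lim : Tendsto b atTop (nhds 0)) :
    (∀ n, (b n)⁻¹ * ∫ ω, K ((s - X ω) / b n) * K ((t - X ω) / b n) ∂μ =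
        ∫ v, K v * K (v + (t - s) / b n) * f (s - v * b n)) ∧
    Tendsto (fun n => (b n)⁻¹ * ∫ ω, K ((s - X ω) / b n) * K ((t - X ω) / b n) ∂μ)
      atTop (nhds 0) := by
  have hKc := hK_lip.continuous
  have hmoment : ∀ n, (b n)⁻¹ * ∫ ω, K ((s - X ω) / b n) * K ((t - X ω) / b n) ∂μ =
      ∫ v, K v * K (v + (t - s) / b n) * f (s - v * b n) := fun n => by
    rw [integral_comp_eq_integral_density_smul hX.aemeasurable hf_meas (ae_of_all _ hf_nonneg)
      hf_density (g := fun x => K ((s - x) / b n) * K ((t - x) / b n))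
      (by fun_prop : Continuous _).aestronglyMeasurable]
    exact inv_mul_integral_kernel_product_eq (hb_pos n)
  have hb_ne : Tendsto b atTop (𝓝[≠] 0) := tendsto_nhdsWithin_of_tendsto_nhds_of_eventually_within
    _ hb_lim (Eventually.of_forall fun n => (hb_pos n).ne')
  have hshift : Tendsto (fun n => (t - s) / b n) atTop (cobounded ℝ) := by
    simpa only [div_eq_mul_inv, Function.comp_def] using
      (tendsto_mul_left_cobounded (sub_ne_zero.mpr hst.symm)).comp
        (tendsto_inv₀_nhdsNE_zero.comp hb_ne)
  obtain ⟨M, hM⟩ := hf_bdd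
  refine ⟨hmoment, ?_⟩
  simp only [hmoment]
  exact tendsto_integral_mul_comp_add_cobounded hK_int hKc
    (hK_lip.uniformContinuous.tendsto_cocompact_zero_of_integrable hK_int)
    (fun n => (hf_meas.comp (by fun_prop)).aestronglyMeasurable)
    (fun n v => (Real.norm_of_nonneg (hf_nonneg _)).trans_le (hM _)) hshift

/-- Cross-term limit at distinct points `s ≠ t` (diagonal covariance structure). -/
theorem stmt12 {Ω : Type*} [MeasurableSpace Ω] (μ : Measure Ω) [IsProbabilityMeasure μ]
    (X : Ω → ℝ) (hX : Measurable X)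
    (f : ℝ → ℝ) (hf_meas : Measurable f) (hf_nonneg : ∀ y, 0 ≤ f y)
    (hf_density : Measure.map X μ = volume.withDensity (fun y => ENNReal.ofReal (f y)))
    (hf_bdd : ∃ M : ℝ, ∀ y, f y ≤ M)
    (s t : ℝ) (hst : s ≠ t) (hf_cont_s : ContinuousAt f s) (hf_cont_t : ContinuousAt f t)
    (K : ℝ → ℝ) (L : NNReal) (hK_lip : LipschitzWith L K)
    (hK_int : Integrable K) (hK2_int : Integrable (fun u => (K u) ^ 2))
    (hK1 : ∫ u, K u = 1)
    (b : ℕ → ℝ) (hb_pos : ∀ n, 0 < b n) (hb_lim : Tendsto b atTop (nhds 0)) :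
    (∀ n, (b n)⁻¹ * ∫ ω, K ((s - X ω) / b n) * K ((t - X ω) / b n) ∂μ =
        ∫ v, K v * K (v + (t - s) / b n) * f (s - v * b n)) ∧
    Tendsto (fun n => (b n)⁻¹ * ∫ ω, K ((s - X ω) / b n) * K ((t - X ω) / b n) ∂μ)
      atTop (nhds 0) :=
  stmt12_general μ X hX f hf_meas hf_nonneg hf_density hf_bdd s t hst K L hK_lip hK_int b hb_pos
    hb_lim
end
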